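/- For every flat Plebeia tree t, the set DOM(t) of keys on which the model ⟦t⟧ is defined is prefix-free. -/
import Mathlib


/-- A side is `L` or `R`. -/
inductive Side : Type
  | L | R
deriving DecidableEq, Repr

/-- A key is a list of sides. -/
abbrev Key := List Side

/-- The strict order `L < R` on sides. -/
def Side.lt : Side → Side → Prop := fun a b => a = Side.L ∧ b = Side.R

/-- The strict lexicographic order on keys induced by `L < R`. -/
def keyLt : Key → Key → Prop := List.Lex Side.lt

/-- A list of keys is prefix-free: for any two distinct keys in it,
neither is a prefix of the other. -/
def PrefixFreeList (ks : List Key) : Prop :=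
  List.Pairwise (fun a b => ¬ a <+: b ∧ ¬ b <+: a) ks

/-- A set of keys is prefix-free. -/
def PrefixFreeSet (S : Set Key) : Prop :=
  ∀ a ∈ S, ∀ b ∈ S, a ≠ b → ¬ a <+: b

/-- A list of keys is strictly increasing in the lexicographic order. -/
def SortedKeys (ks : List Key) : Prop := List.Pairwise keyLt ks

/-- Key list of an association list is prefix-free and strictly increasing. -/
def GoodKeyList (ks : List Key) : Prop := PrefixFreeList ks ∧ SortedKeys ks

/-- Prepend the key `s` to the key of every entry. -/
def prependAll {β : Type _} (s : Key) (l : List (Key × β)) : List (Key × β) :=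
  l.map (fun e => (s ++ e.1, e.2))

/-- `lookup l k` is `some` of the value of the first entry of `l` with key `k`. -/
def lookupA {β : Type _} (l : List (Key × β)) (k : Key) : Option β :=
  (l.find? (fun e => decide (e.1 = k))).map Prod.snd
/-- Flat Plebeia trees over a value type `α`. -/
inductive FNode (α : Type) : Type
  | leaf : α → FNode α
  | branch : FNode α → FNode α → FNode α
  | extender : Key → FNode α → FNode α

variable {α : Type}

def FNode.isExtender : FNode α → Prop
  | .extender _ _ => True
  | _ => False

/-- The model `⟦t⟧ : key ⇀ α` of a flat Plebeia tree, as a function into `Option`. -/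
def FNode.model : FNode α → Key → Option α
  | .leaf v, [] => some v
  | .leaf _, _ :: _ => none
  | .branch l _, Side.L :: k => l.model k
  | .branch _ r, Side.R :: k => r.model k
  | .branch _ _, [] => none
  | .extender s n, k => if s <+: k then n.model (k.drop s.length) else none

/-- `DOM t`: the set of keys on which `⟦t⟧` is defined. -/
def FNode.dom (t : FNode α) : Set Key := {k | (t.model k).isSome}

/-- Structural invariants (SI1), (SI2) at every subtree:
no extender has an extender as direct child, and no extender has an empty key. -/
def FNode.inv : FNode α → Prop
  | .leaf _ => True
  | .branch l r => l.inv ∧ r.inv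
  | .extender s n => (¬ n.isExtender) ∧ s ≠ [] ∧ n.inv

/-- for every flat Plebeia tree `t`, `DOM t` is prefix-free. -/
theorem stmt3 {α : Type} (t : FNode α) : PrefixFreeSet t.dom := by
  induction t with
  | leaf v =>
    intro a ha b hb hne
    cases a with
    | nil => cases b with
      | nil => exact absurd rfl hne
      | cons x xs => simp [FNode.dom, FNode.model] at hb
    | cons x xs => simp [FNode.dom, FNode.model] at ha
  | branch l r ihl ihr =>
    intro a ha b hb hne hpre
    cases a with
    | nil => simp [FNode.dom, FNode.model] at ha
    | cons x xs =>
      cases b with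
      | nil => simp [FNode.dom, FNode.model] at hb
      | cons y ys =>
        obtain ⟨c, hc⟩ := hpre
        simp only [List.cons_append, List.cons.injEq] at hc
        obtain ⟨rfl, rfl⟩ := hc
        cases x with
        | L =>
          exact ihl xs ha (xs ++ c) hb (fun h => hne (congrArg _ h))
            ⟨c, rfl⟩
        | R =>
          exact ihr xs ha (xs ++ c) hb (fun h => hne (congrArg _ h))
            ⟨c, rfl⟩
  | extender s n ih =>
    intro a ha b hb hne hpre
    simp only [FNode.dom, FNode.model, Set.mem_setOf_eq] at ha hb
    by_cases hsa : s <+: a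
    · by_cases hsb : s <+: b
      · obtain ⟨a', rfl⟩ := hsa
        obtain ⟨b', rfl⟩ := hsb
        rw [if_pos ⟨a', rfl⟩] at ha
        rw [if_pos ⟨b', rfl⟩] at hb
        simp only [List.drop_left] at ha hb
        have hne' : a' ≠ b' := fun h => hne (by rw [h])
        have hpre' : a' <+: b' := by
          obtain ⟨c, hc⟩ := hpre
          rw [List.append_assoc] at hc
          exact ⟨c, List.append_cancel_left hc⟩
        exact ih a' ha b' hb hne' hpre'
      · rw [if_neg hsb] at hb; simp at hb
    · rw [if_neg hsa] at ha; simp at ha
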